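/- Let E be a complex Banach space, let T and P be continuous linear operators on E with P ∘ P = P, let c ∈ ℂ, and let q be any polynomial with complex coefficients. If T ∘ T − c² • P is a compact operator, then every accumulation point of the spectrum of q(T) belongs to the set {q(0), q(c), q(−c)}. -/

import Mathlib

/-!
Put `K = T² - c²P`. Since `P² = P`, the polynomial `p = X²(X² - c²)` satisfies
`p(T) = T²K + c²KP - c²K`, so `p(T)` is compact. By the Fredholm alternative the nonzero spectrum
of a compact operator consists of eigenvalues, and by Riesz's lemma only finitely many of them lie
outside any disc around `0`; hence `0` is the only possible accumulation point of `σ(p(T))`.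

If `z` accumulates in `σ(q(T)) = q(σ(T))`, compactness of `σ(T)` yields an accumulation point `w`
of `σ(T)` with `q(w) = z`. As `p` is nonconstant, its fibres are finite, so `p(w)` accumulates in
`p(σ(T)) = σ(p(T))`. Thus `p(w) = 0`, i.e. `w ∈ {0, c, -c}`.
-/

open Filter Topology Module End Polynomial

theorem IsCompact.exists_accPt_of_accPt_image {X Y : Type*} [TopologicalSpace X]
    [TopologicalSpace Y] [T2Space Y] {S : Set X} (hS : IsCompact S) {f : X → Y}
    (hf : ContinuousOn f S) {z : Y} (hz : AccPt z (𝓟 (f '' S))) :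
    ∃ w ∈ S, f w = z ∧ AccPt w (𝓟 S) := by
  set F := 𝓟 S ⊓ comap f (𝓝[≠] z)
  have : F.NeBot := by
    rw [← map_neBot_iff f, Filter.push_pull, map_principal, inf_comm]
    exact hz
  obtain ⟨w, hwS, hw⟩ := hS (f := F) inf_le_left
  have hwF : (𝓝 w ⊓ F).NeBot := hw
  have hwz : f w = z := by
    refine eq_of_nhds_neBot ((map_neBot (m := f) (hf := hwF)).mono (le_inf ?_ ?_))
    · exact (hf w hwS).mono_left (inf_le_inf_left _ inf_le_left)
    · exact (map_le_iff_le_comap.mpr (inf_le_right.trans inf_le_right)).trans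
        nhdsWithin_le_nhds
  have hFw : F ≤ 𝓟 {w}ᶜ := by
    refine inf_le_right.trans (le_principal_iff.mpr ⟨{z}ᶜ, self_mem_nhdsWithin, ?_⟩)
    rintro x hx rfl
    exact hx hwz
  refine ⟨w, hwS, hwz, hwF.mono ?_⟩
  rw [nhdsWithin, inf_assoc]
  exact inf_le_inf_left _ (le_inf hFw inf_le_left)

theorem AccPt.image_of_tendsto_nhdsNE {X Y : Type*} [TopologicalSpace X] [TopologicalSpace Y]
    {S : Set X} {x : X} (h : AccPt x (𝓟 S)) {f : X → Y}
    (hf : Tendsto f (𝓝[≠] x) (𝓝[≠] (f x))) : AccPt (f x) (𝓟 (f '' S)) :=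
  (map_neBot (hf := h)).mono (map_inf_le.trans (inf_le_inf hf (map_principal).le))

theorem Polynomial.tendsto_eval_nhdsNE {R : Type*} [CommRing R] [IsDomain R] [TopologicalSpace R]
    [IsTopologicalRing R] [T1Space R] {p : R[X]} (hp : 0 < p.degree) (a : R) :
    Tendsto (fun x => p.eval x) (𝓝[≠] a) (𝓝[≠] (p.eval a)) := by
  have hne : p - C (p.eval a) ≠ 0 := fun h => by
    have hdeg := degree_C_le (a := p.eval a)
    rw [← sub_eq_zero.mp h] at hdeg
    exact hp.not_ge hdeg
  have hfib : {x | p.eval x = p.eval a}.Finite := by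
    simpa [sub_eq_zero] using finite_setOfPred_isRoot hne
  refine tendsto_nhdsWithin_of_tendsto_nhds_of_eventually_within _
    p.continuous.continuousWithinAt ?_
  have : ({x | p.eval x = p.eval a} \ {a})ᶜ ∈ 𝓝 a :=
    (hfib.sdiff.isClosed.isOpen_compl.mem_nhds fun h => h.2 rfl)
  filter_upwards [mem_nhdsWithin_of_mem_nhds this, self_mem_nhdsWithin] with x hx hxa
  exact fun h => hx ⟨h, hxa⟩

theorem Submodule.exists_mem_one_le_norm_sub_of_lt {𝕜 E : Type*} [NormedField 𝕜]
    [NormedAddCommGroup E] [NormedSpace 𝕜 E] {F G : Submodule 𝕜 E}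
    (hF : IsClosed (F : Set E)) (hFG : F < G) {c : 𝕜} (hc : 1 < ‖c‖) {R : ℝ} (hR : ‖c‖ < R) :
    ∃ x ∈ G, ‖x‖ ≤ R ∧ ∀ y ∈ F, 1 ≤ ‖x - y‖ := by
  obtain ⟨x, hxG, hxF⟩ := SetLike.exists_of_lt hFG
  have hF' : IsClosed ((F.comap G.subtype : Submodule 𝕜 G) : Set G) :=
    hF.preimage continuous_subtype_val
  obtain ⟨⟨x₀, hx₀G⟩, hx₀R, hx₀F⟩ := riesz_lemma_of_norm_lt hc hR hF' ⟨⟨x, hxG⟩, hxF⟩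
  exact ⟨x₀, hx₀G, hx₀R, fun y hy => hx₀F ⟨y, hFG.le hy⟩ hy⟩

namespace IsCompactOperator

variable {𝕜 X : Type*} [NontriviallyNormedField 𝕜] [NormedAddCommGroup X] [NormedSpace 𝕜 X]
  {T : X →L[𝕜] X}

theorem exists_norm_apply_sub_lt (hT : IsCompactOperator T) {x : ℕ → X} {R : ℝ}
    (hx : ∀ n, ‖x n‖ ≤ R) {ε : ℝ} (hε : 0 < ε) : ∃ m n, m < n ∧ ‖T (x n) - T (x m)‖ < ε := by
  obtain ⟨K, hK, hTK⟩ := hT.image_closedBall_subset_compact R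
  obtain ⟨_, _, ψ, hψ, hψx⟩ := hK.tendsto_subseq fun n => hTK ⟨x n, by simpa using hx n, rfl⟩
  obtain ⟨N, hN⟩ := Metric.cauchySeq_iff'.mp hψx.cauchySeq ε hε
  exact ⟨ψ N, ψ (N + 1), hψ N.lt_succ_self, by simpa [dist_eq_norm] using hN (N + 1) N.le_succ⟩

theorem false_of_strictMono_of_sub_smul_mem (hT : IsCompactOperator T)
    {M : ℕ → Submodule 𝕜 X} (hM : StrictMono M) (hM_closed : ∀ n, IsClosed (M n : Set X))
    {μ : ℕ → 𝕜} {r : ℝ} (hr : 0 < r) (hμ : ∀ n, r ≤ ‖μ n‖)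
    (hTM : ∀ n, ∀ x ∈ M (n + 1), T x - μ n • x ∈ M n) : False := by
  obtain ⟨c, hc⟩ := NormedField.exists_one_lt_norm 𝕜
  choose y hyM hy_norm hy_far using fun n =>
    Submodule.exists_mem_one_le_norm_sub_of_lt (hM_closed n) (hM n.lt_succ_self) hc
      (lt_add_one ‖c‖)
  have hTy n : T (y n) ∈ M (n + 1) := by
    simpa using (M (n + 1)).add_mem (hM.monotone n.le_succ (hTM n _ (hyM n)))
      ((M (n + 1)).smul_mem (μ n) (hyM n))
  have hy_sep m n (hmn : m < n) : r ≤ ‖T (y n) - T (y m)‖ := by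
    have hμn : μ n ≠ 0 := norm_pos_iff.mp (hr.trans_le (hμ n))
    set u := (μ n)⁻¹ • (μ n • y n - T (y n) + T (y m))
    have hu : u ∈ M n := by
      refine (M n).smul_mem _ ((M n).add_mem ?_ (hM.monotone hmn (hTy m)))
      simpa using (M n).neg_mem (hTM n _ (hyM n))
    have : T (y n) - T (y m) = μ n • (y n - u) := by
      simp only [u, smul_sub, smul_inv_smul₀ hμn]
      abel
    calc r ≤ ‖μ n‖ * 1 := by simpa using hμ n
      _ ≤ ‖T (y n) - T (y m)‖ := by
        rw [this, norm_smul]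
        exact mul_le_mul_of_nonneg_left (hy_far n u hu) (norm_nonneg _)
  obtain ⟨m, n, hmn, hlt⟩ := hT.exists_norm_apply_sub_lt hy_norm hr
  exact (hy_sep m n hmn).not_gt hlt

theorem finite_setOf_le_norm_hasEigenvalue [CompleteSpace 𝕜] (hT : IsCompactOperator T)
    {r : ℝ} (hr : 0 < r) : {μ | r ≤ ‖μ‖ ∧ HasEigenvalue (T : End 𝕜 X) μ}.Finite := by
  by_contra hinf
  set e := Set.Infinite.natEmbedding _ hinf
  set μ : ℕ → 𝕜 := fun n => e n
  have hμ n : r ≤ ‖μ n‖ ∧ HasEigenvalue (T : End 𝕜 X) (μ n) := (e n).2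
  choose v hv using fun n => (hμ n).2.exists_hasEigenvector
  have hv_indep : LinearIndependent 𝕜 v :=
    eigenvectors_linearIndependent' _ μ (Subtype.val_injective.comp e.injective) v hv
  have hTv i : T (v i) = μ i • v i := (hv i).apply_eq_smul
  set M : ℕ → Submodule 𝕜 X := fun n => Submodule.span 𝕜 (v '' Set.Iio n)
  have hM : StrictMono M := by
    refine strictMono_nat_of_lt_succ fun n => lt_of_le_of_ne
      (Submodule.span_mono (Set.image_mono (Set.Iio_subset_Iio n.le_succ))) fun h => ?_
    refine hv_indep.notMem_span_image (s := Set.Iio n) (x := n) (by simp) ?_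
    exact h.ge (Submodule.subset_span ⟨n, n.lt_succ_self, rfl⟩)
  have hM_closed n : IsClosed (M n : Set X) :=
    have := FiniteDimensional.span_of_finite 𝕜 ((Set.finite_Iio n).image v)
    Submodule.closed_of_finiteDimensional _
  refine hT.false_of_strictMono_of_sub_smul_mem hM hM_closed hr (fun n => (hμ n).1) fun n => ?_
  suffices M (n + 1) ≤ (M n).comap ((T : End 𝕜 X) - μ n • 1) from fun x hx => by simpa using this hx
  rw [Submodule.span_le]
  rintro - ⟨i, hi, rfl⟩
  rcases Nat.lt_succ_iff_lt_or_eq.mp hi with hi | rfl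
  · simpa [hTv, ← sub_smul] using
      (M n).smul_mem (μ i - μ n) (Submodule.subset_span ⟨i, hi, rfl⟩)
  · simp [hTv]

theorem eq_zero_of_accPt_spectrum [CompleteSpace 𝕜] [CompleteSpace X] (hT : IsCompactOperator T)
    {z : 𝕜} (hz : AccPt z (𝓟 (spectrum 𝕜 T))) : z = 0 := by
  by_contra hz0
  have hr : 0 < ‖z‖ / 2 := by positivity
  have hU : {μ : 𝕜 | ‖z‖ / 2 < ‖μ‖} ∈ 𝓝 z :=
    (isOpen_lt continuous_const continuous_norm).mem_nhds (by simpa using hr)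
  refine Set.Infinite.of_accPt (hz.nhds_inter hU)
    ((hT.finite_setOf_le_norm_hasEigenvalue hr).subset ?_)
  rintro μ ⟨hμz, hμ⟩
  have hμ0 : μ ≠ 0 := norm_pos_iff.mp (hr.trans hμz)
  exact ⟨hμz.le, (hT.hasEigenvalue_iff_mem_spectrum hμ0).mpr hμ⟩

end IsCompactOperator

theorem IsCompactOperator.aeval_X_sq_mul_X_sq_sub_C {𝕜 E : Type*} [NontriviallyNormedField 𝕜]
    [NormedAddCommGroup E] [NormedSpace 𝕜 E] {T P : E →L[𝕜] E} (hP : P ∘L P = P) {c : 𝕜}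
    (hK : IsCompactOperator (T ∘L T - c ^ 2 • P)) :
    IsCompactOperator (aeval T (X ^ 2 * (X ^ 2 - C (c ^ 2)))) := by
  set K := T ∘L T - c ^ 2 • P
  have hPP : P * P = P := hP
  have key : aeval T (X ^ 2 * (X ^ 2 - C (c ^ 2))) =
      (T ∘L T) ∘L K + c ^ 2 • (K ∘L P) - c ^ 2 • K := by
    simp only [K, ← ContinuousLinearMap.mul_def, map_mul, map_sub, map_pow, aeval_X, aeval_C,
      Algebra.algebraMap_eq_smul_one, _root_.smul_pow, one_pow]
    simp only [mul_sub, sub_mul, mul_smul_comm, smul_mul_assoc, hPP, smul_sub, smul_smul, pow_two,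
      mul_one, mul_assoc]
    abel
  rw [key]
  exact ((hK.clm_comp (T ∘L T)).add ((hK.comp_clm P).smul (c ^ 2))).sub (hK.smul (c ^ 2))

theorem stmt5 {E : Type*} [NormedAddCommGroup E] [NormedSpace ℂ E] [CompleteSpace E]
    (T P : E →L[ℂ] E) (hP : P ∘L P = P) (c : ℂ) (q : Polynomial ℂ)
    (hcpt : IsCompactOperator (T ∘L T - c ^ 2 • P))
    (z : ℂ) (hz : AccPt z (𝓟 (spectrum ℂ (Polynomial.aeval T q : E →L[ℂ] E)))) :
    z ∈ ({q.eval 0, q.eval c, q.eval (-c)} : Set ℂ) := by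
  have : Nontrivial (E →L[ℂ] E) := by
    by_contra h
    rw [not_nontrivial_iff_subsingleton] at h
    simpa [spectrum.of_subsingleton] using (Set.Infinite.of_accPt hz).nonempty
  rw [spectrum.map_polynomial_aeval] at hz
  obtain ⟨w, -, rfl, hw⟩ :=
    (spectrum.isCompact T).exists_accPt_of_accPt_image q.continuous.continuousOn hz
  set p : ℂ[X] := X ^ 2 * (X ^ 2 - C (c ^ 2))
  have hp : 0 < p.degree := by
    rw [degree_mul, degree_X_pow, degree_X_pow_sub_C two_pos]
    norm_num
  have hpw : p.eval w = 0 := by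
    refine (hcpt.aeval_X_sq_mul_X_sq_sub_C hP).eq_zero_of_accPt_spectrum ?_
    rw [spectrum.map_polynomial_aeval]
    exact hw.image_of_tendsto_nhdsNE (p.tendsto_eval_nhdsNE hp w)
  simp only [p, eval_mul, eval_pow, eval_sub, eval_X, eval_C, mul_eq_zero,
    pow_eq_zero_iff two_ne_zero, sub_eq_zero, sq_eq_sq_iff_eq_or_eq_neg] at hpw
  rcases hpw with rfl | rfl | rfl <;> simp
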